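/- Suppose v_par* is a global minimizer of q_par(v) = g_par^T v + (1/2) v^T Λ v over {v ∈ ℝ^{k+1} : ‖v‖₂ ≤ δ}. Define ‖g_perp‖₂ = √(‖g‖₂² − ‖g_par‖₂²) and define w* ∈ ℝ^n as follows: w* = −(1/γ) g if γ > 0 and ‖g_perp‖₂ ≤ δ γ; w* = (δ/‖P_perp^T e_i‖₂) e_i if γ ≤ 0 and ‖g_perp‖₂ = 0, where i is the first index in {1, …, k+2} with P_perp^T e_i ≠ 0 and ‖P_perp^T e_i‖₂ = √(1 − ‖P_par^T e_i‖₂²); and w* = −(δ/‖g_perp‖₂) g otherwise. Then p* = P_par v_par* + (I_n − P_par P_par^T) w* is a global minimizer of Q(p) = g^T p + (1/2) p^T B p over {p ∈ ℝ^n : ‖p‖_{P,2} ≤ δ}. -/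
import Mathlib


open Matrix

/-- The Euclidean (two-)norm of a vector in `ℝ^m`. -/
noncomputable def norm2 {m : ℕ} (x : Fin m → ℝ) : ℝ := Real.sqrt (∑ i, x i ^ 2)

lemma dot_eq_sum_sq {m : ℕ} (x : Fin m → ℝ) : x ⬝ᵥ x = ∑ i, x i ^ 2 := by
  simp [dotProduct, sq]

lemma dot_self_nonneg {m : ℕ} (x : Fin m → ℝ) : 0 ≤ x ⬝ᵥ x := by
  rw [dot_eq_sum_sq]; positivity

lemma norm2_eq_sqrt_dot {m : ℕ} (x : Fin m → ℝ) : norm2 x = Real.sqrt (x ⬝ᵥ x) := by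
  rw [norm2, dot_eq_sum_sq]

lemma norm2_nonneg {m : ℕ} (x : Fin m → ℝ) : 0 ≤ norm2 x := Real.sqrt_nonneg _

lemma norm2_sq_eq {m : ℕ} (x : Fin m → ℝ) : norm2 x ^ 2 = x ⬝ᵥ x := by
  rw [norm2_eq_sqrt_dot, Real.sq_sqrt (dot_self_nonneg x)]

lemma norm2_le_iff {m : ℕ} {δ : ℝ} (hδ : 0 ≤ δ) (x : Fin m → ℝ) :
    norm2 x ≤ δ ↔ x ⬝ᵥ x ≤ δ ^ 2 := by
  constructor
  · intro h; nlinarith [norm2_sq_eq x, norm2_nonneg x]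
  · intro h; nlinarith [norm2_sq_eq x, norm2_nonneg x]

lemma cs_dot {m : ℕ} (x y : Fin m → ℝ) : (x ⬝ᵥ y) ^ 2 ≤ (x ⬝ᵥ x) * (y ⬝ᵥ y) := by
  rw [dot_eq_sum_sq x, dot_eq_sum_sq y]
  simpa [dotProduct] using Finset.sum_mul_sq_le_sq_mul_sq Finset.univ x y

set_option maxHeartbeats 2000000 in
/-- Suppose `v_par*` is a global minimizer of
`q_par(v) = g_parᵀ v + (1/2) vᵀ Λ v` over `{v : ‖v‖₂ ≤ δ}`.  With
`‖g_perp‖₂ = √(‖g‖₂² - ‖g_par‖₂²)` and `w*` defined by the three cases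
(`w* = -(1/γ) g` if `γ > 0` and `‖g_perp‖₂ ≤ δγ`;
`w* = (δ/‖P_perpᵀ eᵢ‖₂) eᵢ` if `γ ≤ 0` and `‖g_perp‖₂ = 0`, where `i` is the first index
in `{1,…,k+2}` with `P_perpᵀ eᵢ ≠ 0` and `‖P_perpᵀ eᵢ‖₂ = √(1 - ‖P_parᵀ eᵢ‖₂²)`;
`w* = -(δ/‖g_perp‖₂) g` otherwise), the vector
`p* = P_par v_par* + (I - P_par P_parᵀ) w*` is a global minimizer of
`Q(p) = gᵀ p + (1/2) pᵀ B p` over `{p : ‖p‖_{P,2} ≤ δ}`. -/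
theorem reconstructed_global_solution
    (n k : ℕ) (hkn : k + 1 < n)
    (Ppar : Matrix (Fin n) (Fin (k + 1)) ℝ)
    (Pperp : Matrix (Fin n) (Fin (n - (k + 1))) ℝ)
    (hpar : Pparᵀ * Ppar = 1) (hperp : Pperpᵀ * Pperp = 1)
    (hmix : Pparᵀ * Pperp = 0)
    (hfull : Ppar * Pparᵀ + Pperp * Pperpᵀ = 1)
    (lam : Fin (k + 1) → ℝ) (hmono : Monotone lam) (γ : ℝ)
    (B : Matrix (Fin n) (Fin n) ℝ)
    (hB : B = Ppar * Matrix.diagonal lam * Pparᵀ + γ • (Pperp * Pperpᵀ))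
    (g : Fin n → ℝ) (gpar : Fin (k + 1) → ℝ) (hgpar : gpar = Pparᵀ.mulVec g)
    (δ : ℝ) (hδ : 0 < δ)
    (Q : (Fin n → ℝ) → ℝ)
    (hQ : ∀ p, Q p = g ⬝ᵥ p + (1 / 2) * (p ⬝ᵥ B.mulVec p))
    (qpar : (Fin (k + 1) → ℝ) → ℝ)
    (hqpar : ∀ v, qpar v = gpar ⬝ᵥ v + (1 / 2) * (v ⬝ᵥ (Matrix.diagonal lam).mulVec v))
    (vparstar : Fin (k + 1) → ℝ)
    (hvfeas : norm2 vparstar ≤ δ)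
    (hvmin : ∀ v : Fin (k + 1) → ℝ, norm2 v ≤ δ → qpar vparstar ≤ qpar v)
    (ngperp : ℝ) (hngperp : ngperp = Real.sqrt ((norm2 g) ^ 2 - (norm2 gpar) ^ 2))
    -- `i` is the first index in `{1,…,k+2}` (0-based: `i < k + 2`) with `P_perpᵀ eᵢ ≠ 0`
    (i : Fin n) (hik : (i : ℕ) < k + 2)
    (hine : Pperpᵀ.mulVec (Pi.single i 1 : Fin n → ℝ) ≠ 0)
    (hifirst : ∀ j : Fin n, (j : ℕ) < (i : ℕ) →
      Pperpᵀ.mulVec (Pi.single j 1 : Fin n → ℝ) = 0)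
    (wstar : Fin n → ℝ)
    (hw1 : 0 < γ → ngperp ≤ δ * γ → wstar = (-(1 / γ)) • g)
    (hw2 : γ ≤ 0 → ngperp = 0 →
      wstar = (δ / Real.sqrt (1 - (norm2 (Pparᵀ.mulVec (Pi.single i 1 : Fin n → ℝ))) ^ 2)) •
        (Pi.single i 1 : Fin n → ℝ))
    (hw3 : ¬(0 < γ ∧ ngperp ≤ δ * γ) → ¬(γ ≤ 0 ∧ ngperp = 0) →
      wstar = (-(δ / ngperp)) • g)
    (pstar : Fin n → ℝ)
    (hpstar : pstar = Ppar.mulVec vparstar + ((1 : Matrix (Fin n) (Fin n) ℝ)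
        - Ppar * Pparᵀ).mulVec wstar) :
    max (norm2 (Pparᵀ.mulVec pstar)) (norm2 (Pperpᵀ.mulVec pstar)) ≤ δ ∧
      ∀ p : Fin n → ℝ,
        max (norm2 (Pparᵀ.mulVec p)) (norm2 (Pperpᵀ.mulVec p)) ≤ δ → Q pstar ≤ Q p := by

  -- basic orthogonality consequences
  have hQP : Pperpᵀ * Ppar = 0 := by
    have h := congrArg Matrix.transpose hmix
    simpa [Matrix.transpose_mul] using h
  have hPP : ∀ y : Fin (k+1) → ℝ, Pparᵀ.mulVec (Ppar.mulVec y) = y := by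
    intro y; rw [Matrix.mulVec_mulVec, hpar, Matrix.one_mulVec]
  have hdotPar : ∀ (x : Fin n → ℝ) (y : Fin (k+1) → ℝ),
      x ⬝ᵥ Ppar.mulVec y = Pparᵀ.mulVec x ⬝ᵥ y := by
    intro x y; rw [Matrix.dotProduct_mulVec, Matrix.mulVec_transpose]
  have hdotPerp : ∀ (x : Fin n → ℝ) (y : Fin (n-(k+1)) → ℝ),
      x ⬝ᵥ Pperp.mulVec y = Pperpᵀ.mulVec x ⬝ᵥ y := by
    intro x y; rw [Matrix.dotProduct_mulVec, Matrix.mulVec_transpose]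
  have hsplitV : ∀ x : Fin n → ℝ,
      x = Ppar.mulVec (Pparᵀ.mulVec x) + Pperp.mulVec (Pperpᵀ.mulVec x) := by
    intro x
    conv_lhs => rw [← Matrix.one_mulVec x, ← hfull]
    rw [Matrix.add_mulVec, ← Matrix.mulVec_mulVec, ← Matrix.mulVec_mulVec]
  set gperp : Fin (n-(k+1)) → ℝ := Pperpᵀ.mulVec g with hgperp
  have hsplitDot : ∀ x : Fin n → ℝ,
      x ⬝ᵥ x = (Pparᵀ.mulVec x) ⬝ᵥ (Pparᵀ.mulVec x)
        + (Pperpᵀ.mulVec x) ⬝ᵥ (Pperpᵀ.mulVec x) := by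
    intro x
    nth_rewrite 2 [hsplitV x]
    rw [dotProduct_add, hdotPar, hdotPerp]
  -- decomposition of Q
  have hQdecomp : ∀ p : Fin n → ℝ, Q p = qpar (Pparᵀ.mulVec p)
      + (gperp ⬝ᵥ (Pperpᵀ.mulVec p)
        + γ/2 * ((Pperpᵀ.mulVec p) ⬝ᵥ (Pperpᵀ.mulVec p))) := by
    intro p
    have hgp : g ⬝ᵥ p = gpar ⬝ᵥ (Pparᵀ.mulVec p) + gperp ⬝ᵥ (Pperpᵀ.mulVec p) := by
      nth_rewrite 1 [hsplitV p]
      rw [dotProduct_add, hdotPar, hdotPerp, hgpar]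
    have hBp : p ⬝ᵥ B.mulVec p
        = (Pparᵀ.mulVec p) ⬝ᵥ (Matrix.diagonal lam).mulVec (Pparᵀ.mulVec p)
          + γ * ((Pperpᵀ.mulVec p) ⬝ᵥ (Pperpᵀ.mulVec p)) := by
      rw [hB, Matrix.add_mulVec, dotProduct_add]
      congr 1
      · rw [← Matrix.mulVec_mulVec, ← Matrix.mulVec_mulVec, hdotPar]
      · rw [Matrix.smul_mulVec, dotProduct_smul, ← Matrix.mulVec_mulVec,
          hdotPerp, smul_eq_mul]
    rw [hQ, hqpar, hgp, hBp]; ring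
  -- the components of pstar
  have hvstar : Pparᵀ.mulVec pstar = vparstar := by
    have hz : Pparᵀ * ((1 : Matrix (Fin n) (Fin n) ℝ) - Ppar * Pparᵀ) = 0 := by
      rw [Matrix.mul_sub, Matrix.mul_one, ← Matrix.mul_assoc, hpar, Matrix.one_mul,
        sub_self]
    rw [hpstar, Matrix.mulVec_add, hPP, Matrix.mulVec_mulVec, hz, Matrix.zero_mulVec,
      add_zero]
  have hustar : Pperpᵀ.mulVec pstar = Pperpᵀ.mulVec wstar := by
    have hz2 : Pperpᵀ * ((1 : Matrix (Fin n) (Fin n) ℝ) - Ppar * Pparᵀ) = Pperpᵀ := by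
      rw [Matrix.mul_sub, Matrix.mul_one, ← Matrix.mul_assoc, hQP, Matrix.zero_mul,
        sub_zero]
    rw [hpstar, Matrix.mulVec_add, Matrix.mulVec_mulVec, Matrix.mulVec_mulVec, hQP,
      Matrix.zero_mulVec, hz2, zero_add]
  set a : ℝ := gperp ⬝ᵥ gperp with ha_def
  have ha0 : 0 ≤ a := dot_self_nonneg gperp
  have hngperp' : ngperp = norm2 gperp := by
    have h1 : (norm2 g)^2 - (norm2 gpar)^2 = a := by
      rw [norm2_sq_eq, norm2_sq_eq, hgpar]
      have := hsplitDot g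
      rw [this]; ring
    rw [hngperp, h1, norm2_eq_sqrt_dot]
  have hng0 : 0 ≤ ngperp := by rw [hngperp']; exact norm2_nonneg _
  -- reduce to the perpendicular subproblem
  suffices h : (Pperpᵀ.mulVec wstar) ⬝ᵥ (Pperpᵀ.mulVec wstar) ≤ δ^2 ∧
      ∀ u : Fin (n-(k+1)) → ℝ, u ⬝ᵥ u ≤ δ^2 →
        gperp ⬝ᵥ (Pperpᵀ.mulVec wstar)
          + γ/2 * ((Pperpᵀ.mulVec wstar) ⬝ᵥ (Pperpᵀ.mulVec wstar))
        ≤ gperp ⬝ᵥ u + γ/2 * (u ⬝ᵥ u) by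
    obtain ⟨hf, hopt⟩ := h
    constructor
    · apply max_le
      · rw [hvstar]; exact hvfeas
      · rw [hustar]; exact (norm2_le_iff hδ.le _).2 hf
    · intro p hp
      have h1 := le_of_max_le_left hp
      have h2 := le_of_max_le_right hp
      rw [hQdecomp pstar, hQdecomp p, hvstar, hustar]
      have hv := hvmin _ h1
      have hu := hopt _ ((norm2_le_iff hδ.le _).1 h2)
      linarith
  by_cases h1 : 0 < γ ∧ ngperp ≤ δ * γ
  · -- interior case: wstar = -(1/γ) g
    obtain ⟨hγ, hle⟩ := h1
    have hw : Pperpᵀ.mulVec wstar = (-(1/γ)) • gperp := by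
      rw [hw1 hγ hle, Matrix.mulVec_smul]
    have hdots : (Pperpᵀ.mulVec wstar) ⬝ᵥ (Pperpᵀ.mulVec wstar) = (1/γ)^2 * a := by
      rw [hw]
      simp only [smul_dotProduct, dotProduct_smul, smul_eq_mul, ← ha_def]
      ring
    have hdotg : gperp ⬝ᵥ (Pperpᵀ.mulVec wstar) = (-(1/γ)) * a := by
      rw [hw]
      simp only [dotProduct_smul, smul_eq_mul, ← ha_def]
    have haδ : a ≤ δ^2 * γ^2 := by
      have hle' : norm2 gperp ≤ δ * γ := hngperp' ▸ hle
      nlinarith [norm2_sq_eq gperp, norm2_nonneg gperp]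
    have hγ2 : (0:ℝ) < γ^2 := by positivity
    constructor
    · rw [hdots, show (1/γ)^2 * a = a / γ^2 by ring, div_le_iff₀ hγ2]
      linarith
    · intro u hu
      rw [hdots, hdotg]
      have key : 0 ≤ (γ • u + gperp) ⬝ᵥ (γ • u + gperp) := dot_self_nonneg _
      have keyexp : (γ • u + gperp) ⬝ᵥ (γ • u + gperp)
          = γ^2 * (u ⬝ᵥ u) + 2*γ*(gperp ⬝ᵥ u) + a := by
        have hcomm : u ⬝ᵥ gperp = gperp ⬝ᵥ u := dotProduct_comm _ _
        simp only [dotProduct_add, add_dotProduct, smul_dotProduct,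
          dotProduct_smul, smul_eq_mul, hcomm, ← ha_def]
        ring
      rw [keyexp] at key
      have lhs_eq : (-(1/γ)) * a + γ/2 * ((1/γ)^2 * a) = -(a / (2*γ)) := by
        field_simp; ring
      rw [lhs_eq, neg_le, le_div_iff₀ (by positivity : (0:ℝ) < 2*γ)]
      nlinarith [key, hγ]
  · by_cases h2 : γ ≤ 0 ∧ ngperp = 0
    · -- hard case with gperp = 0 : wstar along eᵢ
      obtain ⟨hγ, hn0⟩ := h2
      set x : Fin (n-(k+1)) → ℝ := Pperpᵀ.mulVec (Pi.single i 1) with hx_def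
      set b1 : ℝ := x ⬝ᵥ x with hb1_def
      have hb1pos : 0 < b1 := by
        rcases (dot_self_nonneg x).lt_or_eq with h | h
        · exact h
        · exact absurd (dotProduct_self_eq_zero.1 h.symm) hine
      have hsingle : (Pi.single i 1 : Fin n → ℝ) ⬝ᵥ (Pi.single i 1) = 1 := by
        simp [dotProduct_single]
      have hsum1 : (Pparᵀ.mulVec (Pi.single i 1)) ⬝ᵥ (Pparᵀ.mulVec (Pi.single i 1))
          + b1 = 1 := by
        rw [hb1_def, hx_def, ← hsplitDot, hsingle]
      have hone : 1 - (norm2 (Pparᵀ.mulVec (Pi.single i 1 : Fin n → ℝ)))^2 = b1 := by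
        rw [norm2_sq_eq]; linarith
      set c : ℝ := δ / Real.sqrt (1 - (norm2 (Pparᵀ.mulVec (Pi.single i 1 : Fin n → ℝ)))^2)
        with hc_def
      have hc : c = δ / Real.sqrt b1 := by rw [hc_def, hone]
      have hsb : Real.sqrt b1 ^ 2 = b1 := Real.sq_sqrt hb1pos.le
      have hsbpos : 0 < Real.sqrt b1 := Real.sqrt_pos.2 hb1pos
      have hw : Pperpᵀ.mulVec wstar = c • x := by
        rw [hw2 hγ hn0, Matrix.mulVec_smul]
      have hcsq : c^2 * b1 = δ^2 := by
        rw [hc, div_pow, hsb, div_mul_cancel₀ _ hb1pos.ne']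
      have hdots : (Pperpᵀ.mulVec wstar) ⬝ᵥ (Pperpᵀ.mulVec wstar) = δ^2 := by
        rw [hw]
        simp only [smul_dotProduct, dotProduct_smul, smul_eq_mul, ← hb1_def]
        rw [← hcsq]; ring
      have hA0 : a = 0 := by
        have : norm2 gperp = 0 := by rw [← hngperp', hn0]
        rw [ha_def, ← norm2_sq_eq, this]; ring
      have hgu : ∀ u : Fin (n-(k+1)) → ℝ, gperp ⬝ᵥ u = 0 := by
        intro u
        have hcs := cs_dot gperp u
        rw [← ha_def, hA0, zero_mul] at hcs
        have := sq_nonneg (gperp ⬝ᵥ u)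
        have hsq : (gperp ⬝ᵥ u)^2 = 0 := le_antisymm hcs this
        exact sq_eq_zero_iff.1 hsq
      constructor
      · rw [hdots]
      · intro u hu
        rw [hdots, hgu u, hgu]
        have h5 : γ/2 * δ^2 ≤ γ/2 * (u ⬝ᵥ u) :=
          mul_le_mul_of_nonpos_left hu (by linarith)
        linarith
    · -- boundary case: wstar = -(δ/ngperp) g
      have hw := hw3 h1 h2
      have hsa : 0 < ngperp := by
        rcases hng0.lt_or_eq with h | h
        · exact h
        · exfalso
          rcases le_or_gt γ 0 with hγ | hγ
          · exact h2 ⟨hγ, h.symm⟩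
          · exact h1 ⟨hγ, by rw [← h]; positivity⟩
      set sa : ℝ := ngperp with hsa_def
      have hasa : a = sa^2 := by rw [ha_def, ← norm2_sq_eq, ← hngperp']
      have hwv : Pperpᵀ.mulVec wstar = (-(δ/sa)) • gperp := by
        rw [hw, Matrix.mulVec_smul]
      have hsane : sa ≠ 0 := hsa.ne'
      have hcancel : δ / sa * sa = δ := div_mul_cancel₀ δ hsane
      have hdsq : (-(δ/sa))^2 * sa^2 = δ^2 := by
        calc (-(δ/sa))^2 * sa^2 = (δ/sa*sa)^2 := by ring
        _ = δ^2 := by rw [hcancel]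
      have hdg : (-(δ/sa)) * sa^2 = -δ * sa := by
        calc (-(δ/sa)) * sa^2 = -((δ/sa*sa)*sa) := by ring
        _ = -δ * sa := by rw [hcancel]; ring
      have hdots : (Pperpᵀ.mulVec wstar) ⬝ᵥ (Pperpᵀ.mulVec wstar) = δ^2 := by
        rw [hwv]
        simp only [smul_dotProduct, dotProduct_smul, smul_eq_mul, ← ha_def]
        rw [hasa, ← hdsq]; ring
      have hdotg : gperp ⬝ᵥ (Pperpᵀ.mulVec wstar) = -δ * sa := by
        rw [hwv]
        simp only [dotProduct_smul, smul_eq_mul, ← ha_def]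
        rw [hasa, ← hdg]
      constructor
      · rw [hdots]
      · intro u hu
        rw [hdots, hdotg]
        set s : ℝ := gperp ⬝ᵥ u with hs_def
        set t : ℝ := u ⬝ᵥ u with ht_def
        have ht0 : 0 ≤ t := dot_self_nonneg u
        set r : ℝ := Real.sqrt t with hr_def
        have hr2 : r^2 = t := Real.sq_sqrt ht0
        have hr0 : 0 ≤ r := Real.sqrt_nonneg _
        have hrδ : r ≤ δ := by
          rw [hr_def, show δ = Real.sqrt (δ^2) from (Real.sqrt_sq hδ.le).symm]
          exact Real.sqrt_le_sqrt hu
        have hcs : s^2 ≤ a * t := cs_dot gperp u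
        have hslb : -(sa * r) ≤ s := by
          have h1' : |s| = Real.sqrt (s^2) := (Real.sqrt_sq_eq_abs s).symm
          have h2' : Real.sqrt (s^2) ≤ Real.sqrt (a * t) := Real.sqrt_le_sqrt hcs
          have h3' : Real.sqrt (a * t) = sa * r := by
            rw [hasa, hr_def, Real.sqrt_mul (sq_nonneg sa) t, Real.sqrt_sq hsa.le]
          have h4' := neg_abs_le s
          rw [h1'] at h4'
          have := h2'.trans_eq h3'
          linarith
        rcases le_or_gt γ 0 with hγ | hγ
        · have h4 : sa * r ≤ sa * δ := mul_le_mul_of_nonneg_left hrδ hsa.le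
          have h5 : γ * δ^2 ≤ γ * t := mul_le_mul_of_nonpos_left hu hγ
          linarith
        · have hlt : δ * γ < sa := by
            by_contra hc
            push_neg at hc
            exact h1 ⟨hγ, hc⟩
          have hγr : γ * r ≤ γ * δ := mul_le_mul_of_nonneg_left hrδ hγ.le
          have hprod : 0 ≤ (δ - r) * (sa - γ*(δ+r)/2) :=
            mul_nonneg (by linarith) (by linarith)
          nlinarith [hprod, hslb, hr2]
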